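/- arXiv:2603.29357 — 7 statements merged into one kernel-verified Lean document; each statement's English description precedes it below -/
import Mathlib

section
/- Let u and v be unit vectors in a real inner product space with ρ := ⟪u, v⟫ and ρ > −1. Then the set { min(corr(w₁·u + w₂·v, u), corr(w₁·u + w₂·v, v)) : w₁ > 0, w₂ > 0 } has greatest element √((1 + ρ)/2); that is, every positive-weight composite satisfies min of the two correlations ≤ √((1 + ρ)/2), and this value is attained (e.g. at w₁ = w₂ = 1). -/
open scoped RealInnerProductSpace

/-- Pearson correlation of two vectors in a real inner product space
(standardized scores are modeled as unit vectors). -/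
noncomputable def corr {E : Type*} [NormedAddCommGroup E] [InnerProductSpace ℝ E]
    (x y : E) : ℝ := ⟪x, y⟫ / (‖x‖ * ‖y‖)

set_option maxHeartbeats 1000000 in
/-- Composite correlation ceiling: over all positive-weight composites of two
standardized scores with correlation `ρ > -1`, the minimum of the two
correlations with the individual scores has greatest value `√((1 + ρ)/2)`. -/
theorem composite_correlation_ceiling
    {E : Type*} [NormedAddCommGroup E] [InnerProductSpace ℝ E]
    (u v : E) (hu : ‖u‖ = 1) (hv : ‖v‖ = 1)
    (ρ : ℝ) (hρ : ρ = ⟪u, v⟫) (hρ' : -1 < ρ) :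
    IsGreatest
      {m : ℝ | ∃ w₁ w₂ : ℝ, 0 < w₁ ∧ 0 < w₂ ∧
        m = min (corr (w₁ • u + w₂ • v) u) (corr (w₁ • u + w₂ • v) v)}
      (Real.sqrt ((1 + ρ) / 2)) := by
  have huu : ⟪u, u⟫ = 1 := by rw [real_inner_self_eq_norm_sq, hu]; norm_num
  have hvv : ⟪v, v⟫ = 1 := by rw [real_inner_self_eq_norm_sq, hv]; norm_num
  have hvu : ⟪v, u⟫ = ρ := by rw [real_inner_comm, hρ]
  have hρ1 : ρ ≤ 1 := by
    have := real_inner_le_norm u v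
    rw [hu, hv] at this; rw [hρ]; linarith
  have hpos : (0:ℝ) < 1 + ρ := by linarith
  have key : ∀ w₁ w₂ : ℝ,
      ⟪w₁ • u + w₂ • v, u⟫ = w₁ + w₂ * ρ ∧
      ⟪w₁ • u + w₂ • v, v⟫ = w₁ * ρ + w₂ ∧
      ‖w₁ • u + w₂ • v‖ ^ 2 = w₁^2 + 2*w₁*w₂*ρ + w₂^2 := by
    intro w₁ w₂
    refine ⟨?_, ?_, ?_⟩
    · simp [inner_add_left, real_inner_smul_left, huu, hvu, hρ, hu]
    · simp [inner_add_left, real_inner_smul_left, hvv, hvu, hρ, hv]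
    · rw [← real_inner_self_eq_norm_sq]
      rw [inner_add_left, inner_add_right, inner_add_right]
      simp only [real_inner_smul_left,
        real_inner_smul_right, huu, hvv, hvu, ← hρ]
      ring
  constructor
  · refine ⟨1, 1, one_pos, one_pos, ?_⟩
    obtain ⟨h1, h2, h3⟩ := key 1 1
    set N := ‖(1:ℝ) • u + (1:ℝ) • v‖ with hNdef
    have hN2 : N ^ 2 = 2 + 2*ρ := by rw [h3]; ring
    have hNnn : 0 ≤ N := norm_nonneg _
    have hNpos : 0 < N := by nlinarith [hN2]
    have hs : Real.sqrt ((1 + ρ) / 2) * N = 1 + ρ := by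
      have hN : N = Real.sqrt (2 + 2*ρ) := by rw [← hN2, Real.sqrt_sq hNnn]
      rw [hN, ← Real.sqrt_mul (by linarith)]
      have : (1 + ρ) / 2 * (2 + 2*ρ) = (1+ρ)^2 := by ring
      rw [this, Real.sqrt_sq hpos.le]
    have hc : corr ((1:ℝ) • u + (1:ℝ) • v) u = Real.sqrt ((1 + ρ) / 2) := by
      rw [corr, h1, hu, ← hNdef, mul_one, div_eq_iff hNpos.ne']
      linarith [hs]
    have hc' : corr ((1:ℝ) • u + (1:ℝ) • v) v = Real.sqrt ((1 + ρ) / 2) := by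
      rw [corr, h2, hv, ← hNdef, mul_one, div_eq_iff hNpos.ne']
      linarith [hs]
    rw [hc, hc', min_self]
  · rintro m ⟨w₁, w₂, hw1, hw2, rfl⟩
    obtain ⟨h1, h2, h3⟩ := key w₁ w₂
    set N := ‖w₁ • u + w₂ • v‖ with hNdef
    have hN2 : N ^ 2 = w₁^2 + 2*w₁*w₂*ρ + w₂^2 := h3
    have hNnn : 0 ≤ N := norm_nonneg _
    clear_value N
    have hNpos : 0 < N := by
      nlinarith [sq_nonneg (w₁ - w₂), mul_pos hw1 hw2, hN2]
    have havg : min (corr (w₁ • u + w₂ • v) u) (corr (w₁ • u + w₂ • v) v)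
        ≤ (w₁ + w₂) * (1 + ρ) / (2 * N) := by
      have e1 : corr (w₁ • u + w₂ • v) u = (w₁ + w₂ * ρ) / N := by
        rw [corr, h1, hu, ← hNdef, mul_one]
      have e2 : corr (w₁ • u + w₂ • v) v = (w₁ * ρ + w₂) / N := by
        rw [corr, h2, hv, ← hNdef, mul_one]
      rw [e1, e2]
      have heq : (w₁ + w₂) * (1 + ρ) / (2 * N)
          = ((w₁ + w₂ * ρ) / N + (w₁ * ρ + w₂) / N) / 2 := by
        field_simp; ring
      rw [heq]
      have ha := min_le_left ((w₁ + w₂ * ρ) / N) ((w₁ * ρ + w₂) / N)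
      have hb := min_le_right ((w₁ + w₂ * ρ) / N) ((w₁ * ρ + w₂) / N)
      linarith
    refine havg.trans ?_
    rw [div_le_iff₀ (by positivity)]
    set s := Real.sqrt ((1 + ρ) / 2) with hsdef
    have hss : s ^ 2 = (1 + ρ) / 2 := by
      rw [hsdef]; exact Real.sq_sqrt (by linarith)
    have hsnn : 0 ≤ s := by rw [hsdef]; exact Real.sqrt_nonneg _
    clear_value s
    clear key h1 h2 h3 hNdef havg huu hvv hvu hρ hu hv hsdef
    clear u v
    have hsq : ((w₁ + w₂) * (1 + ρ))^2 ≤ (s * (2 * N))^2 := by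
      have h4 : (s * (2 * N))^2 = 2 * (1 + ρ) * N^2 := by
        rw [mul_pow, hss]; ring
      rw [h4, hN2]
      nlinarith [mul_nonneg (mul_nonneg hpos.le (by linarith : (0:ℝ) ≤ 1 - ρ))
        (sq_nonneg (w₁ - w₂))]
    have hL : 0 ≤ (w₁ + w₂) * (1 + ρ) := by positivity
    have hR : 0 ≤ s * (2 * N) := by positivity
    nlinarith [hsq, hL, hR]
end

section
/- Let u and v be unit vectors in a real inner product space with ρ := ⟪u, v⟫ and ρ > −1. Then for all real w₁ > 0 and w₂ > 0, with c := w₁·u + w₂·v, one has min(corr(c, u), corr(c, v)) ≤ √((1 + ρ)/2). -/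
open scoped RealInnerProductSpace

lemma min_le_avg (a b : ℝ) : min a b ≤ (a + b) / 2 := by
  rcases le_total a b with h | h
  · rw [min_eq_left h]; linarith
  · rw [min_eq_right h]; linarith

/-- Upper-bound half of the composite correlation ceiling: every positive-weight
composite `c = w₁ • u + w₂ • v` of two standardized scores with correlation
`ρ > -1` satisfies `min (corr c u) (corr c v) ≤ √((1 + ρ)/2)`. -/
theorem composite_correlation_upper_bound
    {E : Type*} [NormedAddCommGroup E] [InnerProductSpace ℝ E]
    (u v : E) (hu : ‖u‖ = 1) (hv : ‖v‖ = 1)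
    (ρ : ℝ) (hρ : ρ = ⟪u, v⟫) (hρ' : -1 < ρ)
    (w₁ w₂ : ℝ) (hw₁ : 0 < w₁) (hw₂ : 0 < w₂) :
    min (corr (w₁ • u + w₂ • v) u) (corr (w₁ • u + w₂ • v) v)
      ≤ Real.sqrt ((1 + ρ) / 2) := by
  set c := w₁ • u + w₂ • v with hc
  have huu : ⟪u, u⟫ = 1 := by
    rw [real_inner_self_eq_norm_sq, hu]; norm_num
  have hvv : ⟪v, v⟫ = 1 := by
    rw [real_inner_self_eq_norm_sq, hv]; norm_num
  have hvu : ⟪v, u⟫ = ρ := by rw [real_inner_comm, ← hρ]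
  have hcu : ⟪c, u⟫ = w₁ + w₂ * ρ := by
    simp [hc, inner_add_left, real_inner_smul_left, huu, hvu, hu]
  have hcv : ⟪c, v⟫ = w₁ * ρ + w₂ := by
    simp [hc, inner_add_left, real_inner_smul_left, hvv, ← hρ, hv]
  have hn2 : ‖c‖ ^ 2 = w₁ ^ 2 + w₂ ^ 2 + 2 * w₁ * w₂ * ρ := by
    rw [← real_inner_self_eq_norm_sq, hc]
    simp only [inner_add_left, inner_add_right, real_inner_smul_left,
      real_inner_smul_right, huu, hvv, hvu, ← hρ]
    ring
  have hρ1 : ρ ≤ 1 := by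
    have := real_inner_le_norm u v
    rw [hu, hv] at this
    simpa [← hρ] using this
  have hn2pos : 0 < ‖c‖ ^ 2 := by nlinarith [sq_nonneg (w₁ - w₂), mul_pos hw₁ hw₂]
  have hnpos : 0 < ‖c‖ := by
    nlinarith [norm_nonneg c]
  set s := Real.sqrt ((1 + ρ) / 2) with hs
  have hsnn : 0 ≤ s := Real.sqrt_nonneg _
  have hs2 : s ^ 2 = (1 + ρ) / 2 := Real.sq_sqrt (by linarith)
  have h1 : ((w₁ + w₂) * s) ^ 2 ≤ ‖c‖ ^ 2 := by
    rw [mul_pow, hs2, hn2]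
    nlinarith [sq_nonneg (w₁ - w₂)]
  have h2 : (w₁ + w₂) * s ≤ ‖c‖ := by
    nlinarith [mul_nonneg (by linarith : (0:ℝ) ≤ w₁ + w₂) hsnn]
  have key : (w₁ + w₂) * (1 + ρ) / (2 * ‖c‖) ≤ s := by
    rw [div_le_iff₀ (by positivity)]
    have : (w₁ + w₂) * (1 + ρ) = 2 * s * ((w₁ + w₂) * s) := by
      rw [show 2 * s * ((w₁ + w₂) * s) = (w₁ + w₂) * (2 * s ^ 2) by ring, hs2]
      ring
    rw [this]
    nlinarith
  have h1' : corr c u = (w₁ + w₂ * ρ) / ‖c‖ := by simp [corr, hcu, hu]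
  have h2' : corr c v = (w₁ * ρ + w₂) / ‖c‖ := by simp [corr, hcv, hv]
  calc min (corr c u) (corr c v) ≤ (corr c u + corr c v) / 2 := min_le_avg _ _
    _ = (w₁ + w₂) * (1 + ρ) / (2 * ‖c‖) := by
        rw [h1', h2']; field_simp; ring
    _ ≤ s := key
end

section
/- Let u and v be unit vectors in a real inner product space with ρ := ⟪u, v⟫ and ρ > −1. Then for every real t > 0, corr(u + t·v, u) = corr(u + t⁻¹·v, v); that is, with r₁(t) := corr(u + t·v, u) and r₂(t) := corr(u + t·v, v), one has r₁(t) = r₂(1/t). -/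
open scoped RealInnerProductSpace

/-- Symmetry `r₁(t) = r₂(1/t)`: for unit vectors `u, v` with `ρ = ⟪u, v⟫ > -1`
and `t > 0`, `corr (u + t • v) u = corr (u + t⁻¹ • v) v`. -/
theorem corr_composite_symmetry
    {E : Type*} [NormedAddCommGroup E] [InnerProductSpace ℝ E]
    (u v : E) (hu : ‖u‖ = 1) (hv : ‖v‖ = 1)
    (ρ : ℝ) (hρ : ρ = ⟪u, v⟫) (hρ' : -1 < ρ)
    (t : ℝ) (ht : 0 < t) :
    corr (u + t • v) u = corr (u + t⁻¹ • v) v := by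
  have hρ2 : ⟪u, v⟫ = ρ := hρ.symm
  have huu : ⟪u, u⟫ = 1 := by
    rw [real_inner_self_eq_norm_sq, hu]; norm_num
  have hvv : ⟪v, v⟫ = 1 := by
    rw [real_inner_self_eq_norm_sq, hv]; norm_num
  have hvu : ⟪v, u⟫ = ρ := by rw [real_inner_comm]; exact hρ.symm
  have ht' : t ≠ 0 := ht.ne'
  have hA : ‖u + t • v‖ ^ 2 = t ^ 2 + 2 * t * ρ + 1 := by
    rw [← real_inner_self_eq_norm_sq]
    simp only [inner_add_add_self, real_inner_smul_left, real_inner_smul_right,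
      huu, hvv, hρ2, hvu]
    ring
  have hB : ‖u + t⁻¹ • v‖ ^ 2 = t⁻¹ ^ 2 + 2 * t⁻¹ * ρ + 1 := by
    rw [← real_inner_self_eq_norm_sq]
    simp only [inner_add_add_self, real_inner_smul_left, real_inner_smul_right,
      huu, hvv, hρ2, hvu]
    ring
  have hApos : (0:ℝ) < t ^ 2 + 2 * t * ρ + 1 := by nlinarith [sq_nonneg (t - 1), mul_pos ht (show (0:ℝ) < ρ + 1 by linarith)]
  have hAn : 0 < ‖u + t • v‖ := by
    rcases (norm_nonneg (u + t • v)).lt_or_eq with h | h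
    · exact h
    · exfalso; rw [← h] at hA; simp at hA; nlinarith [hApos]
  have hBeq : ‖u + t⁻¹ • v‖ = t⁻¹ * ‖u + t • v‖ := by
    have hsq : ‖u + t⁻¹ • v‖ ^ 2 = (t⁻¹ * ‖u + t • v‖) ^ 2 := by
      rw [hB, mul_pow, hA]
      field_simp
      ring
    have h1 : 0 ≤ ‖u + t⁻¹ • v‖ := norm_nonneg _
    have h2 : 0 ≤ t⁻¹ * ‖u + t • v‖ := by positivity
    nlinarith [sq_nonneg (‖u + t⁻¹ • v‖ - t⁻¹ * ‖u + t • v‖),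
      sq_nonneg (‖u + t⁻¹ • v‖ + t⁻¹ * ‖u + t • v‖)]
  have hnum1 : ⟪u + t • v, u⟫ = 1 + t * ρ := by
    simp [inner_add_left, real_inner_smul_left, huu, hvu, hu]
  have hnum2 : ⟪u + t⁻¹ • v, v⟫ = ρ + t⁻¹ := by
    simp [inner_add_left, real_inner_smul_left, hvv, hρ2, hv]
  unfold corr
  rw [hnum1, hnum2, hBeq, hu, hv]
  rw [mul_one, mul_one]
  field_simp
  ring
end

section
/- Let ρ be a real number with −1 < ρ < 1. Then the function t ↦ (1 + t·ρ)/√(1 + 2tρ + t²) is strictly decreasing on the interval (0, ∞). -/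
/-!
With `Q(t) = 1 + 2tρ + t²`, the quotient rule gives
`r₁'(t) = (ρ Q(t) - (1 + tρ)(t + ρ)) / Q(t)^{3/2} = -t (1 - ρ²) / Q(t)^{3/2}`,
which is negative for `t > 0` and `ρ² < 1`; and `Q(t) = (1 - t)² + 2t(1 + ρ) > 0` there.
-/

open Real

noncomputable def compositeCorr (ρ t : ℝ) : ℝ :=
  (1 + t * ρ) / √(1 + 2 * t * ρ + t ^ 2)

lemma one_add_two_mul_mul_add_sq_pos {ρ t : ℝ} (hρ : -1 < ρ) (ht : 0 < t) :
    0 < 1 + 2 * t * ρ + t ^ 2 := by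
  nlinarith [sq_nonneg (1 - t)]

lemma hasDerivAt_compositeCorr {ρ x : ℝ} (hQ : 0 < 1 + 2 * x * ρ + x ^ 2) :
    HasDerivAt (compositeCorr ρ)
      (-(x * (1 - ρ ^ 2)) / ((1 + 2 * x * ρ + x ^ 2) * √(1 + 2 * x * ρ + x ^ 2))) x := by
  have hnum : HasDerivAt (fun t : ℝ => 1 + t * ρ) ρ x := by
    simpa using ((hasDerivAt_id x).mul_const ρ).const_add 1
  have hQ' : HasDerivAt (fun t : ℝ => 1 + 2 * t * ρ + t ^ 2) (2 * ρ + 2 * x) x :=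
    (((((hasDerivAt_id' x).const_mul 2).mul_const ρ).const_add 1).add
      ((hasDerivAt_id' x).pow 2)).congr_deriv (by ring)
  have hs := sq_sqrt hQ.le
  have hs_pos := sqrt_pos.mpr hQ
  refine (hnum.div (hQ'.sqrt hQ.ne') hs_pos.ne').congr_deriv ?_
  generalize √(1 + 2 * x * ρ + x ^ 2) = s at hs hs_pos ⊢
  rw [← hs]
  field_simp
  linear_combination ρ * hs

/-- The first correlation curve `r₁(t) = (1 + t·ρ)/√(1 + 2tρ + t²)` is strictly
decreasing on `(0, ∞)` when `-1 < ρ < 1`. -/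
theorem r1_strictAntiOn (ρ : ℝ) (hρ₁ : -1 < ρ) (hρ₂ : ρ < 1) :
    StrictAntiOn (fun t : ℝ => (1 + t * ρ) / Real.sqrt (1 + 2 * t * ρ + t ^ 2))
      (Set.Ioi (0 : ℝ)) := by
  have hQ {x : ℝ} (hx : x ∈ Set.Ioi 0) := one_add_two_mul_mul_add_sq_pos hρ₁ hx
  refine strictAntiOn_of_deriv_neg (f := compositeCorr ρ) (convex_Ioi 0)
    (fun x hx => (hasDerivAt_compositeCorr (hQ hx)).continuousAt.continuousWithinAt)
    (fun x hx => ?_)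
  rw [interior_Ioi] at hx
  have hx_pos : 0 < x := hx
  have hρ_sq : 0 < 1 - ρ ^ 2 := by nlinarith
  have hs_pos := sqrt_pos.mpr (hQ hx)
  rw [(hasDerivAt_compositeCorr (hQ hx)).deriv]
  exact div_neg_of_neg_of_pos (neg_neg_of_pos (mul_pos hx_pos hρ_sq)) (mul_pos (hQ hx) hs_pos)
end

section
/- Let ρ be a real number with −1 < ρ < 1. Then the function t ↦ (ρ + t)/√(1 + 2tρ + t²) is strictly increasing on the interval (0, ∞). -/
open Real

/- Completing the square, `1 + 2tρ + t² = (ρ + t)² + (1 - ρ²)` with `1 - ρ² > 0`, so `r₂` is a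
translate of the odd function `a ↦ a / √(a² + c)`, which is increasing on `[0, ∞)` by squaring. -/

theorem strictMono_div_sqrt_sq_add {c : ℝ} (hc : 0 < c) :
    StrictMono fun a : ℝ => a / √(a ^ 2 + c) := by
  refine strictMono_of_odd_strictMonoOn_nonneg (fun a => by simp [neg_div]) ?_
  intro a (ha : 0 ≤ a) b (hb : 0 ≤ b) hab
  have hsq : a ^ 2 < b ^ 2 := pow_lt_pow_left₀ hab ha two_ne_zero
  rw [div_lt_div_iff₀ (by positivity) (by positivity)]
  refine lt_of_pow_lt_pow_left₀ 2 (by positivity) ?_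
  rw [mul_pow, mul_pow, sq_sqrt (by positivity), sq_sqrt (by positivity)]
  nlinarith

/-- The second correlation curve `r₂(t) = (ρ + t)/√(1 + 2tρ + t²)` is strictly
increasing on `(0, ∞)` when `-1 < ρ < 1`. -/
theorem r2_strictMonoOn (ρ : ℝ) (hρ₁ : -1 < ρ) (hρ₂ : ρ < 1) :
    StrictMonoOn (fun t : ℝ => (ρ + t) / Real.sqrt (1 + 2 * t * ρ + t ^ 2))
      (Set.Ioi (0 : ℝ)) := by
  have hc : 0 < 1 - ρ ^ 2 := by nlinarith
  have hsq (t : ℝ) : 1 + 2 * t * ρ + t ^ 2 = (ρ + t) ^ 2 + (1 - ρ ^ 2) := by ring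
  simp_rw [hsq]
  exact ((strictMono_div_sqrt_sq_add hc).comp (strictMono_id.const_add ρ)).strictMonoOn _
end

section
/- Let ρ be a real number with −1 < ρ < 1. Then the set { min((1 + tρ)/√(1 + 2tρ + t²), (ρ + t)/√(1 + 2tρ + t²)) : t > 0 } has greatest element √((1 + ρ)/2), attained at t = 1. -/
lemma eq_at_one (ρ : ℝ) (hρ₁ : -1 < ρ) :
    min ((1 + 1 * ρ) / Real.sqrt (1 + 2 * 1 * ρ + 1 ^ 2))
        ((ρ + 1) / Real.sqrt (1 + 2 * 1 * ρ + 1 ^ 2))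
      = Real.sqrt ((1 + ρ) / 2) := by
  have h1 : (1 : ℝ) + 1 * ρ = ρ + 1 := by ring
  rw [h1, min_self]
  have hpos : (0:ℝ) < 1 + ρ := by linarith
  have hQ : (1:ℝ) + 2 * 1 * ρ + 1 ^ 2 = 2 + 2 * ρ := by ring
  rw [hQ]
  have hs : Real.sqrt (2 + 2 * ρ) > 0 := Real.sqrt_pos.mpr (by linarith)
  have hs2 : Real.sqrt (2 + 2 * ρ) ^ 2 = 2 + 2 * ρ := Real.sq_sqrt (by linarith)
  have hnn : 0 ≤ (ρ + 1) / Real.sqrt (2 + 2 * ρ) := div_nonneg (by linarith) hs.le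
  have : (1 + ρ) / 2 = ((ρ + 1) / Real.sqrt (2 + 2 * ρ)) ^ 2 := by
    field_simp
    rw [Real.sq_sqrt (by linarith : (0:ℝ) ≤ (1 + ρ) * 2)]; ring
  rw [this, Real.sqrt_sq hnn]

/-- Real-variable form of the composite correlation ceiling: for `-1 < ρ < 1`,
the set `{ min (r₁ t) (r₂ t) | t > 0 }`, where
`r₁ t = (1 + tρ)/√(1 + 2tρ + t²)` and `r₂ t = (ρ + t)/√(1 + 2tρ + t²)`,
has greatest element `√((1 + ρ)/2)`, attained at `t = 1`. -/
theorem composite_ceiling_real (ρ : ℝ) (hρ₁ : -1 < ρ) (hρ₂ : ρ < 1) :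
    IsGreatest
      {m : ℝ | ∃ t : ℝ, 0 < t ∧
        m = min ((1 + t * ρ) / Real.sqrt (1 + 2 * t * ρ + t ^ 2))
              ((ρ + t) / Real.sqrt (1 + 2 * t * ρ + t ^ 2))}
      (Real.sqrt ((1 + ρ) / 2)) ∧
    min ((1 + 1 * ρ) / Real.sqrt (1 + 2 * 1 * ρ + 1 ^ 2))
        ((ρ + 1) / Real.sqrt (1 + 2 * 1 * ρ + 1 ^ 2))
      = Real.sqrt ((1 + ρ) / 2) := by
  refine ⟨⟨⟨1, one_pos, ?_⟩, ?_⟩, eq_at_one ρ hρ₁⟩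
  · exact (eq_at_one ρ hρ₁).symm
  · rintro m ⟨t, ht, rfl⟩
    have hQpos : (0:ℝ) < 1 + 2 * t * ρ + t ^ 2 := by nlinarith [sq_nonneg (t + ρ)]
    set Q := (1:ℝ) + 2 * t * ρ + t ^ 2 with hQ
    have hs : 0 < Real.sqrt Q := Real.sqrt_pos.mpr hQpos
    have hs2 : Real.sqrt Q ^ 2 = Q := Real.sq_sqrt hQpos.le
    have hmin : min ((1 + t * ρ) / Real.sqrt Q) ((ρ + t) / Real.sqrt Q)
        ≤ (1 + ρ) * (1 + t) / (2 * Real.sqrt Q) := by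
      calc min ((1 + t * ρ) / Real.sqrt Q) ((ρ + t) / Real.sqrt Q)
          ≤ ((1 + t * ρ) / Real.sqrt Q + (ρ + t) / Real.sqrt Q) / 2 := by
            have h1 := min_le_left ((1 + t * ρ) / Real.sqrt Q) ((ρ + t) / Real.sqrt Q)
            have h2 := min_le_right ((1 + t * ρ) / Real.sqrt Q) ((ρ + t) / Real.sqrt Q)
            linarith
        _ = (1 + ρ) * (1 + t) / (2 * Real.sqrt Q) := by field_simp; ring
    refine hmin.trans ?_
    have hnn : 0 ≤ (1 + ρ) * (1 + t) / (2 * Real.sqrt Q) := by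
      have : (0:ℝ) ≤ (1 + ρ) * (1 + t) := by nlinarith
      positivity
    refine (Real.le_sqrt hnn (by linarith)).mpr ?_
    rw [div_pow]
    rw [div_le_div_iff₀ (by positivity) (by norm_num)]
    have key : (1 + ρ) * (1 + t) ^ 2 ≤ 2 * Q := by nlinarith [sq_nonneg (1 - t), mul_nonneg (sub_nonneg.mpr hρ₂.le) (sq_nonneg (1 - t))]
    have h2 : (2 * Real.sqrt Q) ^ 2 = 4 * Q := by nlinarith [hs2]
    nlinarith [key, hQpos, sq_nonneg (1+ρ), mul_le_mul_of_nonneg_left key (by linarith : (0:ℝ) ≤ 1 + ρ)]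
end

section
/- Let (Ω, μ) be a probability space and let M : Ω → Matrix (Fin T) (Fin N) ℝ be a random T × N matrix whose T·N entries are independent standard Gaussian random variables (mean 0, variance 1). Then E[tr(M Mᵀ)] = T·N, E[tr((M Mᵀ)²)] = T·N·(T + N + 1), and hence (E[tr(M Mᵀ)])² / E[tr((M Mᵀ)²)] = T·N/(T + N + 1). -/
open Matrix MeasureTheory ProbabilityTheory Real

lemma my_integrable_pow_gauss (n : ℕ) :
    Integrable (fun x : ℝ => x ^ n * Real.exp (-(1/2 : ℝ) * x ^ 2)) := by
  have h := integrable_rpow_mul_exp_neg_mul_sq (b := 1/2) (by norm_num) (s := n)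
    (by exact_mod_cast neg_one_lt_zero.trans_le n.cast_nonneg)
  simpa [Real.rpow_natCast] using h

lemma my_gauss_rec (n : ℕ) :
    ∫ x : ℝ, x ^ (n + 2) * Real.exp (-(1/2 : ℝ) * x ^ 2)
      = (n + 1 : ℝ) * ∫ x : ℝ, x ^ n * Real.exp (-(1/2 : ℝ) * x ^ 2) := by
  set e : ℝ → ℝ := fun x => Real.exp (-(1/2 : ℝ) * x ^ 2) with he
  have hderiv : ∀ x : ℝ, HasDerivAt (fun x => x ^ (n+1) * e x)
      ((n + 1 : ℝ) * x ^ n * e x - x ^ (n + 2) * e x) x := by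
    intro x
    have h1 : HasDerivAt (fun x : ℝ => x ^ (n+1)) ((n+1 : ℝ) * x ^ n) x := by
      simpa using hasDerivAt_pow (n+1) x
    have h2 : HasDerivAt e (-x * e x) x := by
      have : HasDerivAt (fun x : ℝ => -(1/2 : ℝ) * x ^ 2) (-x) x := by
        simpa using ((hasDerivAt_pow 2 x).const_mul (-(1/2 : ℝ)))
      simpa [he, mul_comm] using this.exp
    have : HasDerivAt (fun x => x ^ (n+1) * e x) _ x := h1.mul h2
    convert this using 1
    ring
  have hint : Integrable (fun x : ℝ =>
      (n + 1 : ℝ) * x ^ n * e x - x ^ (n + 2) * e x) := by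
    exact (((my_integrable_pow_gauss n).const_mul (n+1 : ℝ)).sub (my_integrable_pow_gauss (n+2))).congr (by filter_upwards with x; simp [he]; ring)
  have h0 := integral_eq_zero_of_hasDerivAt_of_integrable hderiv hint
    (my_integrable_pow_gauss (n+1))
  have hia : Integrable (fun x : ℝ => (n + 1 : ℝ) * x ^ n * e x) := by
    exact ((my_integrable_pow_gauss n).const_mul (n+1 : ℝ)).congr
      (by filter_upwards with x; simp [he]; ring)
  rw [integral_sub hia (my_integrable_pow_gauss (n+2))] at h0
  have h1 : ∫ x : ℝ, (n + 1 : ℝ) * x ^ n * e x = (n+1 : ℝ) * ∫ x : ℝ, x ^ n * e x := by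
    simp_rw [mul_assoc]
    exact MeasureTheory.integral_const_mul _ _
  rw [h1] at h0
  linarith [h0]

lemma my_I0 : ∫ x : ℝ, x ^ 0 * Real.exp (-(1/2 : ℝ) * x ^ 2) = Real.sqrt (2 * π) := by
  have := integral_gaussian (1/2)
  norm_num at this ⊢
  rw [this, mul_comm]

lemma my_I1 : ∫ x : ℝ, x ^ 1 * Real.exp (-(1/2 : ℝ) * x ^ 2) = 0 := by
  have hderiv : ∀ x : ℝ, HasDerivAt (fun x : ℝ => -Real.exp (-(1/2 : ℝ) * x ^ 2))
      (x ^ 1 * Real.exp (-(1/2 : ℝ) * x ^ 2)) x := by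
    intro x
    have : HasDerivAt (fun x : ℝ => -(1/2 : ℝ) * x ^ 2) (-x) x := by
      simpa using ((hasDerivAt_pow 2 x).const_mul (-(1/2 : ℝ)))
    have : HasDerivAt (fun x : ℝ => -Real.exp (-(1/2 : ℝ) * x ^ 2)) _ x := this.exp.neg
    convert this using 1
    ring
  exact integral_eq_zero_of_hasDerivAt_of_integrable hderiv
    (my_integrable_pow_gauss 1) ((my_integrable_pow_gauss 0).congr
      (by filter_upwards with x; simp)).neg

lemma my_pdf_eq (x : ℝ) : gaussianPDFReal 0 1 x
    = (Real.sqrt (2 * π))⁻¹ * Real.exp (-(1/2 : ℝ) * x ^ 2) := by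
  rw [gaussianPDFReal]
  norm_num
  ring_nf
  simp

lemma my_gauss_moment (n : ℕ) :
    ∫ x, x ^ n ∂(gaussianReal 0 1)
      = (Real.sqrt (2 * π))⁻¹ * ∫ x : ℝ, x ^ n * Real.exp (-(1/2 : ℝ) * x ^ 2) := by
  rw [gaussianReal_of_var_ne_zero 0 one_ne_zero]
  have hmeas : Measurable fun x => (gaussianPDFReal 0 1 x).toNNReal :=
    (measurable_gaussianPDFReal 0 1).real_toNNReal
  have : (gaussianPDF 0 1) = fun x => ((gaussianPDFReal 0 1 x).toNNReal : ENNReal) := by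
    funext x; rfl
  rw [this, integral_withDensity_eq_integral_smul hmeas]
  rw [← integral_const_mul]
  congr 1
  funext x
  rw [NNReal.smul_def, Real.coe_toNNReal _ (gaussianPDFReal_nonneg 0 1 x), smul_eq_mul,
    my_pdf_eq]
  ring

lemma my_gauss_integrable (n : ℕ) :
    Integrable (fun x => x ^ n) (gaussianReal 0 1) := by
  rw [gaussianReal_of_var_ne_zero 0 one_ne_zero]
  have hmeas : Measurable fun x => (gaussianPDFReal 0 1 x).toNNReal :=
    (measurable_gaussianPDFReal 0 1).real_toNNReal
  have : (gaussianPDF 0 1) = fun x => ((gaussianPDFReal 0 1 x).toNNReal : ENNReal) := by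
    funext x; rfl
  rw [this, integrable_withDensity_iff_integrable_smul hmeas]
  refine ((my_integrable_pow_gauss n).const_mul ((Real.sqrt (2*π))⁻¹)).congr ?_
  filter_upwards with x
  rw [NNReal.smul_def, Real.coe_toNNReal _ (gaussianPDFReal_nonneg 0 1 x), smul_eq_mul,
    my_pdf_eq]
  ring

lemma my_m1 : ∫ x, x ^ 1 ∂(gaussianReal 0 1) = 0 := by
  rw [my_gauss_moment, my_I1, mul_zero]

lemma my_m2 : ∫ x, x ^ 2 ∂(gaussianReal 0 1) = 1 := by
  have h2 := my_gauss_rec 0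
  rw [my_gauss_moment]
  have hI0 := my_I0
  norm_num at h2 hI0 ⊢
  rw [h2, hI0]
  have h1 : Real.sqrt π ≠ 0 := by positivity
  have h2 : Real.sqrt 2 ≠ 0 := by positivity
  field_simp

lemma my_m4 : ∫ x, x ^ 4 ∂(gaussianReal 0 1) = 3 := by
  have h2 := my_gauss_rec 0
  have h4 := my_gauss_rec 2
  rw [my_gauss_moment]
  have hI0 := my_I0
  norm_num at h2 h4 hI0 ⊢
  rw [h4, h2, hI0]
  have h1 : Real.sqrt π ≠ 0 := by positivity
  have h2 : Real.sqrt 2 ≠ 0 := by positivity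
  field_simp

lemma my_prod_indep {Ω ι : Type*} [MeasurableSpace Ω] {μ : Measure Ω} [IsProbabilityMeasure μ]
    (Y : ι → Ω → ℝ)
    (hmeas : ∀ i, Measurable (Y i))
    (hind : iIndepFun Y μ)
    (hint : ∀ i, Integrable (Y i) μ) (s : Finset ι) :
    Integrable (fun ω => ∏ i ∈ s, Y i ω) μ ∧
      ∫ ω, ∏ i ∈ s, Y i ω ∂μ = ∏ i ∈ s, ∫ ω, Y i ω ∂μ := by
  classical
  induction s using Finset.induction_on with
  | empty => simp
  | insert _ _ ha ih =>
    rename_i a s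
    have hIF : IndepFun (∏ j ∈ s, Y j) (Y a) μ :=
      hind.indepFun_finsetProd_of_notMem hmeas ha
    have hps : (∏ j ∈ s, Y j) = fun ω => ∏ j ∈ s, Y j ω := by
      funext ω; simp [Finset.prod_apply]
    rw [hps] at hIF
    have hintp : Integrable ((fun ω => ∏ j ∈ s, Y j ω) * Y a) μ :=
      hIF.integrable_mul ih.1 (hint a)
    have hval := hIF.integral_mul_eq_mul_integral ih.1.aestronglyMeasurable (hint a).aestronglyMeasurable
    constructor
    · refine hintp.congr ?_
      filter_upwards with ω
      simp [Finset.prod_insert ha, mul_comm]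
    · rw [Finset.prod_insert ha, ← ih.2, mul_comm, ← hval]
      congr 1
      funext ω
      simp [Finset.prod_insert ha, mul_comm]

/-- Expected spectral moments of a standard-Gaussian random matrix: if the
`T·N` entries of a random `T × N` matrix `M` are independent standard Gaussian
random variables, then `E[tr(M Mᵀ)] = T·N`,
`E[tr((M Mᵀ)²)] = T·N·(T + N + 1)`, and hence
`(E[tr(M Mᵀ)])² / E[tr((M Mᵀ)²)] = T·N/(T + N + 1)`, the finite-size version
of the random-matrix null baseline `ED_null = TN/(T + N)`. -/
theorem expected_trace_moments_gaussian
    {Ω : Type*} [MeasurableSpace Ω] (μ : Measure Ω) [IsProbabilityMeasure μ]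
    {T N : ℕ} (M : Ω → Matrix (Fin T) (Fin N) ℝ)
    (hmeas : ∀ i k, Measurable fun ω => M ω i k)
    (hindep : iIndepFun
      (fun (p : Fin T × Fin N) ω => M ω p.1 p.2) μ)
    (hgauss : ∀ i k, Measure.map (fun ω => M ω i k) μ = gaussianReal 0 1) :
    (∫ ω, Matrix.trace (M ω * (M ω)ᵀ) ∂μ = (T : ℝ) * N) ∧
    (∫ ω, Matrix.trace ((M ω * (M ω)ᵀ) ^ 2) ∂μ = (T : ℝ) * N * ((T : ℝ) + N + 1)) ∧
    (∫ ω, Matrix.trace (M ω * (M ω)ᵀ) ∂μ) ^ 2 / (∫ ω, Matrix.trace ((M ω * (M ω)ᵀ) ^ 2) ∂μ)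
      = (T : ℝ) * N / ((T : ℝ) + N + 1) := by
  classical
  set X : Fin T × Fin N → Ω → ℝ := fun p ω => M ω p.1 p.2 with hX
  have hXmeas : ∀ p, Measurable (X p) := fun p => hmeas p.1 p.2
  have hmap : ∀ p, Measure.map (X p) μ = gaussianReal 0 1 := fun p => hgauss p.1 p.2
  have hEp : ∀ (p) (n : ℕ), ∫ ω, X p ω ^ n ∂μ = ∫ x, x ^ n ∂(gaussianReal 0 1) := by
    intro p n
    rw [← hmap p]
    exact (integral_map (hXmeas p).aemeasurable
      ((by fun_prop : Measurable fun x : ℝ => x ^ n)).aestronglyMeasurable).symm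
  have hIp : ∀ (p) (n : ℕ), Integrable (fun ω => X p ω ^ n) μ := by
    intro p n
    have h := my_gauss_integrable n
    rw [← hmap p] at h
    exact (integrable_map_measure ((by fun_prop : Measurable fun x : ℝ => x ^ n)).aestronglyMeasurable
      (hXmeas p).aemeasurable).mp h
  have hindpow : ∀ m : ℕ, iIndepFun
      (fun p ω => X p ω ^ m) μ := by
    intro m
    exact hindep.comp (fun p x => x ^ m) (fun p => measurable_id.pow_const m)
  -- value of a pure power
  have hval : ∀ (p) (n : ℕ) (c : ℝ), (∫ x, x ^ n ∂(gaussianReal 0 1) = c) →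
      ∫ ω, X p ω ^ n ∂μ = c := fun p n c hc => (hEp p n).trans hc
  -- key monomial lemma
  have key : ∀ (i j : Fin T) (k l : Fin N),
      Integrable (fun ω => M ω i k * M ω j k * (M ω j l * M ω i l)) μ ∧
      ∫ ω, M ω i k * M ω j k * (M ω j l * M ω i l) ∂μ =
        ((if i = j then (1:ℝ) else 0) + (if k = l then 1 else 0)
          + (if i = j ∧ k = l then 1 else 0)) := by
    intro i j k l
    by_cases hij : i = j <;> by_cases hkl : k = l
    · subst hij; subst hkl
      have heq : (fun ω => M ω i k * M ω i k * (M ω i k * M ω i k))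
          = fun ω => X (i,k) ω ^ 4 := by funext ω; simp [hX]; ring
      rw [heq]
      exact ⟨hIp (i,k) 4, by rw [hval (i,k) 4 3 my_m4]; norm_num⟩
    · subst hij
      have hpq : ((i,k) : Fin T × Fin N) ≠ (i,l) := by simp [Prod.ext_iff, hkl]
      have h := my_prod_indep (fun p ω => X p ω ^ 2) (fun p => (hXmeas p).pow_const 2)
        (hindpow 2) (fun p => hIp p 2) {(i,k), (i,l)}
      rw [Finset.prod_pair hpq] at h
      have heq : (fun ω => M ω i k * M ω i k * (M ω i l * M ω i l))
          = fun ω => X (i,k) ω ^ 2 * X (i,l) ω ^ 2 := by funext ω; simp [hX]; ring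
      rw [heq]
      refine ⟨h.1.congr ?_, ?_⟩
      · filter_upwards with ω; simp [Finset.prod_pair hpq]
      · have h2 := h.2
        simp only [Finset.prod_pair hpq] at h2
        rw [show (∫ ω, X (i,k) ω ^ 2 * X (i,l) ω ^ 2 ∂μ)
            = (∫ ω, X (i,k) ω ^ 2 ∂μ) * ∫ ω, X (i,l) ω ^ 2 ∂μ from h2,
          hval _ 2 1 my_m2, hval _ 2 1 my_m2]
        simp [hkl]
    · subst hkl
      have hpq : ((i,k) : Fin T × Fin N) ≠ (j,k) := by simp [Prod.ext_iff, hij]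
      have h := my_prod_indep (fun p ω => X p ω ^ 2) (fun p => (hXmeas p).pow_const 2)
        (hindpow 2) (fun p => hIp p 2) {(i,k), (j,k)}
      rw [Finset.prod_pair hpq] at h
      have heq : (fun ω => M ω i k * M ω j k * (M ω j k * M ω i k))
          = fun ω => X (i,k) ω ^ 2 * X (j,k) ω ^ 2 := by funext ω; simp [hX]; ring
      rw [heq]
      refine ⟨h.1.congr ?_, ?_⟩
      · filter_upwards with ω; simp [Finset.prod_pair hpq]
      · have h2 := h.2
        simp only [Finset.prod_pair hpq] at h2
        rw [h2, hval _ 2 1 my_m2, hval _ 2 1 my_m2]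
        simp [hij]
    · -- four distinct indices
      have h := my_prod_indep X hXmeas
        (by simpa [hX] using hindep) (fun p => by simpa using hIp p 1)
        {(i,k), (j,k), (j,l), (i,l)}
      have h1 : ((i,k) : Fin T × Fin N) ∉ ({(j,k), (j,l), (i,l)} : Finset _) := by
        simp [Prod.ext_iff, hij, hkl]
      have h2 : ((j,k) : Fin T × Fin N) ∉ ({(j,l), (i,l)} : Finset _) := by
        simp [Prod.ext_iff, hij, hkl, Ne.symm hij]
      have h3 : ((j,l) : Fin T × Fin N) ≠ (i,l) := by simp [Prod.ext_iff, hij, Ne.symm hij]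
      rw [show ({(i,k), (j,k), (j,l), (i,l)} : Finset (Fin T × Fin N))
          = insert (i,k) (insert (j,k) {(j,l), (i,l)}) from rfl] at h
      have hE1 : ∀ p, ∫ ω, X p ω ∂μ = 0 := by
        intro p
        have := hval p 1 0 my_m1
        simpa using this
      refine ⟨?_, ?_⟩
      · refine h.1.congr ?_
        filter_upwards with ω
        rw [Finset.prod_insert h1, Finset.prod_insert h2, Finset.prod_pair h3]
        simp [hX]; ring
      · have heq : (fun ω => M ω i k * M ω j k * (M ω j l * M ω i l))
            = fun ω => ∏ p ∈ insert (i,k) (insert (j,k) {(j,l), (i,l)}), X p ω := by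
          funext ω
          rw [Finset.prod_insert h1, Finset.prod_insert h2, Finset.prod_pair h3]
          simp [hX]; ring
        rw [heq, h.2, Finset.prod_insert h1, Finset.prod_insert h2, Finset.prod_pair h3,
          hE1, hE1]
        simp [hij, hkl]
  -- first moment
  have key1 : ∀ (i : Fin T) (k : Fin N),
      Integrable (fun ω => M ω i k * M ω i k) μ ∧ ∫ ω, M ω i k * M ω i k ∂μ = 1 := by
    intro i k
    have heq : (fun ω => M ω i k * M ω i k) = fun ω => X (i,k) ω ^ 2 := by
      funext ω; simp [hX]; ring
    rw [heq]
    exact ⟨hIp (i,k) 2, hval (i,k) 2 1 my_m2⟩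
  have htr1 : ∀ ω, Matrix.trace (M ω * (M ω)ᵀ) = ∑ i, ∑ k, M ω i k * M ω i k := by
    intro ω
    simp [Matrix.trace, Matrix.mul_apply, Matrix.diag, Matrix.transpose_apply]
  have hfirst : ∫ ω, Matrix.trace (M ω * (M ω)ᵀ) ∂μ = (T : ℝ) * N := by
    simp_rw [htr1]
    rw [integral_finset_sum _ (fun i _ => integrable_finset_sum _ (fun k _ => (key1 i k).1))]
    rw [Finset.sum_congr rfl (fun i _ => integral_finset_sum _ (fun k _ => (key1 i k).1))]
    simp [fun i k => (key1 i k).2, Finset.sum_const, Finset.card_univ]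
  have htr2 : ∀ ω, Matrix.trace ((M ω * (M ω)ᵀ) ^ 2)
      = ∑ i, ∑ j, ∑ k, ∑ l, M ω i k * M ω j k * (M ω j l * M ω i l) := by
    intro ω
    rw [pow_two]
    simp only [Matrix.trace, Matrix.diag, Matrix.mul_apply, Matrix.transpose_apply]
    exact Finset.sum_congr rfl fun i _ => Finset.sum_congr rfl fun j _ =>
      Finset.sum_mul_sum _ _ _ _
  have hsecond : ∫ ω, Matrix.trace ((M ω * (M ω)ᵀ) ^ 2) ∂μ
      = (T : ℝ) * N * ((T : ℝ) + N + 1) := by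
    simp_rw [htr2]
    rw [integral_finset_sum _ (fun i _ => integrable_finset_sum _ (fun j _ =>
      integrable_finset_sum _ (fun k _ => integrable_finset_sum _ (fun l _ => (key i j k l).1))))]
    rw [Finset.sum_congr rfl (fun i _ => integral_finset_sum _ (fun j _ =>
      integrable_finset_sum _ (fun k _ => integrable_finset_sum _ (fun l _ => (key i j k l).1))))]
    rw [Finset.sum_congr rfl (fun i _ => Finset.sum_congr rfl (fun j _ =>
      integral_finset_sum _ (fun k _ => integrable_finset_sum _ (fun l _ => (key i j k l).1))))]
    rw [Finset.sum_congr rfl (fun i _ => Finset.sum_congr rfl (fun j _ =>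
      Finset.sum_congr rfl (fun k _ =>
        integral_finset_sum _ (fun l _ => (key i j k l).1))))]
    rw [Finset.sum_congr rfl (fun i _ => Finset.sum_congr rfl (fun j _ =>
      Finset.sum_congr rfl (fun k _ => Finset.sum_congr rfl (fun l _ => (key i j k l).2))))]
    simp only [Finset.sum_add_distrib, Finset.sum_ite_eq, Finset.mem_univ, if_true,
      Finset.sum_const, Finset.card_univ, Fintype.card_fin, nsmul_eq_mul, ite_and]
    simp only [mul_ite, mul_one, mul_zero, Finset.sum_ite_eq, Finset.mem_univ, if_true,
      Finset.sum_const, Finset.card_univ, Fintype.card_fin, nsmul_eq_mul]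
    have hinner : ∀ (x y : Fin T), (∑ k : Fin N, ∑ l : Fin N,
        if x = y then (if k = l then (1:ℝ) else 0) else 0) = if x = y then (N:ℝ) else 0 := by
      intro x y; by_cases h : x = y <;> simp [h]
    simp only [hinner, Finset.sum_ite_eq, Finset.mem_univ, if_true, Finset.sum_const,
      Finset.card_univ, Fintype.card_fin, nsmul_eq_mul]
    push_cast
    ring
  refine ⟨hfirst, hsecond, ?_⟩
  rw [hfirst, hsecond]
  by_cases h0 : (T : ℝ) * N = 0
  · simp [h0]
  · rw [pow_two, mul_div_mul_left _ _ h0]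
end
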